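/- There exists a nonzero real polynomial g in eight variables a_{11},a_{12},a_{21},a_{22},b_{11},b_{12},b_{21},b_{22} such that for all real payoff matrices a, b satisfying g(a,b) ≠ 0 together with the sign conditions (a_{11}−a_{21})(a_{22}−a_{12}) > 0 and (b_{11}−b_{12})(b_{22}−b_{21}) > 0, the set of dependency equilibria { P ∈ ℝ^{2×2} : all p_{ij} > 0, Σ p_{ij} = 1, f_1(P) = f_2(P) = 0 } of the 2×2 game (a,b), with the subspace topology from ℝ⁴, is nonempty and connected (it consists of exactly one arc). -/

import Mathlib

/-!
Write a joint distribution with positive entries as `p₁₁ = r x`, `p₁₂ = r (1 - x)`,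
`p₂₁ = (1 - r) y`, `p₂₂ = (1 - r) (1 - y)` with `r, x, y ∈ (0, 1)`. Then
`f₁ = r (1 - r) ((a₂₁ y + a₂₂ (1 - y)) - (a₁₁ x + a₁₂ (1 - x)))`, so `f₁ = 0` cuts out a convex
set `C` of conditionals `(x, y)`, nonempty by the sign condition on `a`. For fixed `(x, y)`,
`f₂` is a quadratic in `r` whose values at `r = 0` and `r = 1` have opposite signs by the sign
condition on `b`, so it has exactly one root `ρ(x, y)` in `(0, 1)`. Since the sign of `f₂` at
the ends does not depend on `(x, y)`, the comparisons `t < ρ(x, y)` and `ρ(x, y) < t` are read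
off the sign of `f₂` at `t`, which makes `ρ` continuous. The equilibria are the image of the
connected set `C` under the continuous map `(x, y) ↦ P(ρ(x, y), x, y)`.
-/

/-- The set of dependency equilibria of the `2 × 2` game with payoff matrices
`a = (aᵢⱼ)` and `b = (bᵢⱼ)`, as a subset of `ℝ⁴`. -/
def depEquilibria (a11 a12 a21 a22 b11 b12 b21 b22 : ℝ) :
    Set (ℝ × ℝ × ℝ × ℝ) :=
  {P | (0 < P.1 ∧ 0 < P.2.1 ∧ 0 < P.2.2.1 ∧ 0 < P.2.2.2) ∧
       P.1 + P.2.1 + P.2.2.1 + P.2.2.2 = 1 ∧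
       (P.1 + P.2.1) * (a21 * P.2.2.1 + a22 * P.2.2.2)
         - (a11 * P.1 + a12 * P.2.1) * (P.2.2.1 + P.2.2.2) = 0 ∧
       (P.1 + P.2.2.1) * (b12 * P.2.1 + b22 * P.2.2.2)
         - (b11 * P.1 + b21 * P.2.2.1) * (P.2.1 + P.2.2.2) = 0}

open Set

section UniqueRoot

variable {f : ℝ → ℝ} {a b ρ t : ℝ}

lemma neg_of_lt_unique_root (hf : ContinuousOn f (Icc a b)) (ha : f a < 0) (hρb : ρ ≤ b)
    (huniq : ∀ r ∈ Ioo a b, f r = 0 → r = ρ) (hat : a ≤ t) (htρ : t < ρ) : f t < 0 := by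
  by_contra! h
  obtain ⟨r, hr, hfr⟩ :=
    intermediate_value_Icc hat (hf.mono (Icc_subset_Icc_right (by linarith))) ⟨ha.le, h⟩
  have hra : a < r := hr.1.lt_of_ne (by rintro rfl; exact ha.ne hfr)
  linarith [huniq r ⟨hra, by linarith [hr.2]⟩ hfr, hr.2]

lemma pos_of_unique_root_lt (hf : ContinuousOn f (Icc a b)) (hb : 0 < f b) (haρ : a ≤ ρ)
    (huniq : ∀ r ∈ Ioo a b, f r = 0 → r = ρ) (hρt : ρ < t) (htb : t ≤ b) : 0 < f t := by
  by_contra! h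
  obtain ⟨r, hr, hfr⟩ :=
    intermediate_value_Icc htb (hf.mono (Icc_subset_Icc_left (by linarith))) ⟨h, hb.le⟩
  have hrb : r < b := hr.2.lt_of_ne (by rintro rfl; exact hb.ne' hfr)
  linarith [huniq r ⟨by linarith [hr.1], hrb⟩ hfr, hr.1]

lemma neg_iff_lt_unique_root (hf : ContinuousOn f (Icc a b)) (ha : f a < 0) (hb : 0 < f b)
    (hρ : ρ ∈ Ioo a b) (hfρ : f ρ = 0) (huniq : ∀ r ∈ Ioo a b, f r = 0 → r = ρ)
    (ht : t ∈ Icc a b) : f t < 0 ↔ t < ρ := by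
  refine ⟨fun h => lt_of_not_ge fun hρt => ?_, neg_of_lt_unique_root hf ha hρ.2.le huniq ht.1⟩
  rcases hρt.eq_or_lt with rfl | hlt
  · exact h.ne hfρ
  · exact (pos_of_unique_root_lt hf hb hρ.1.le huniq hlt ht.2).not_gt h

lemma pos_iff_unique_root_lt (hf : ContinuousOn f (Icc a b)) (ha : f a < 0) (hb : 0 < f b)
    (hρ : ρ ∈ Ioo a b) (hfρ : f ρ = 0) (huniq : ∀ r ∈ Ioo a b, f r = 0 → r = ρ)
    (ht : t ∈ Icc a b) : 0 < f t ↔ ρ < t := by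
  refine ⟨fun h => lt_of_not_ge fun htρ => ?_,
    fun h => pos_of_unique_root_lt hf hb hρ.1.le huniq h ht.2⟩
  rcases htρ.eq_or_lt with rfl | hlt
  · exact h.ne' hfρ
  · exact (neg_of_lt_unique_root hf ha hρ.2.le huniq ht.1 hlt).not_gt h

variable {X : Type*} [TopologicalSpace X] {s : Set X} {F : X → ℝ → ℝ}

lemma continuousOn_of_unique_root {ρ : X → ℝ} (hFx : ∀ x ∈ s, ContinuousOn (F x) (Icc a b))
    (hFt : ∀ t, ContinuousOn (F · t) s) (ha : ∀ x ∈ s, F x a < 0) (hb : ∀ x ∈ s, 0 < F x b)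
    (hρ : ∀ x ∈ s, ρ x ∈ Ioo a b) (hFρ : ∀ x ∈ s, F x (ρ x) = 0)
    (huniq : ∀ x ∈ s, ∀ r ∈ Ioo a b, F x r = 0 → r = ρ x) : ContinuousOn ρ s := by
  have hiff_neg : ∀ x ∈ s, ∀ t ∈ Icc a b, F x t < 0 ↔ t < ρ x := fun x hx _ ht =>
    neg_iff_lt_unique_root (hFx x hx) (ha x hx) (hb x hx) (hρ x hx) (hFρ x hx) (huniq x hx) ht
  have hiff_pos : ∀ x ∈ s, ∀ t ∈ Icc a b, 0 < F x t ↔ ρ x < t := fun x hx _ ht =>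
    pos_iff_unique_root_lt (hFx x hx) (ha x hx) (hb x hx) (hρ x hx) (hFρ x hx) (huniq x hx) ht
  intro x hx
  refine tendsto_order.2 ⟨fun t ht => ?_, fun t ht => ?_⟩
  · rcases le_or_gt t a with hta | hat
    · filter_upwards [self_mem_nhdsWithin] with y hy using hta.trans_lt (hρ y hy).1
    have htI : t ∈ Icc a b := ⟨hat.le, (ht.trans (hρ x hx).2).le⟩
    filter_upwards [self_mem_nhdsWithin,
      (hFt t x hx).eventually_lt_const ((hiff_neg x hx t htI).2 ht)] with y hy hFy
    exact (hiff_neg y hy t htI).1 hFy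
  · rcases le_or_gt b t with hbt | htb
    · filter_upwards [self_mem_nhdsWithin] with y hy using (hρ y hy).2.trans_le hbt
    have htI : t ∈ Icc a b := ⟨((hρ x hx).1.trans ht).le, htb.le⟩
    filter_upwards [self_mem_nhdsWithin,
      (hFt t x hx).eventually_const_lt ((hiff_pos x hx t htI).2 ht)] with y hy hFy
    exact (hiff_pos y hy t htI).1 hFy

theorem exists_continuousOn_unique_root (hab : a ≤ b)
    (hFx : ∀ x ∈ s, ContinuousOn (F x) (Icc a b)) (hFt : ∀ t, ContinuousOn (F · t) s)
    (ha : ∀ x ∈ s, F x a < 0) (hb : ∀ x ∈ s, 0 < F x b)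
    (huniq : ∀ x ∈ s, {r ∈ Ioo a b | F x r = 0}.Subsingleton) :
    ∃ ρ : X → ℝ, ContinuousOn ρ s ∧
      ∀ x ∈ s, ρ x ∈ Ioo a b ∧ ∀ r ∈ Ioo a b, F x r = 0 ↔ r = ρ x := by
  have hroot : ∀ x ∈ s, ∃ r ∈ Ioo a b, F x r = 0 := fun x hx =>
    intermediate_value_Ioo hab (hFx x hx) ⟨ha x hx, hb x hx⟩
  choose! ρ hρ hFρ using hroot
  have huniq' : ∀ x ∈ s, ∀ r ∈ Ioo a b, F x r = 0 → r = ρ x := fun x hx r hr hFr =>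
    huniq x hx ⟨hr, hFr⟩ ⟨hρ x hx, hFρ x hx⟩
  refine ⟨ρ, continuousOn_of_unique_root hFx hFt ha hb hρ hFρ huniq', fun x hx => ⟨hρ x hx, ?_⟩⟩
  exact fun r hr => ⟨huniq' x hx r hr, fun h => h ▸ hFρ x hx⟩

end UniqueRoot

/-- Two roots `r ≠ s` would force `u v = c² r s (1 - r) (1 - s) ≥ 0` (Vieta). -/
lemma subsingleton_quadratic_roots {u v : ℝ} (huv : u * v < 0) (c : ℝ) :
    {r ∈ Ioo (0 : ℝ) 1 | (1 - r) * u + r * v - c * r * (1 - r) = 0}.Subsingleton := by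
  rintro r ⟨hr, hr₀⟩ s ⟨hs, hs₀⟩
  by_contra hne
  have hsum : v - u - c + c * (r + s) = 0 :=
    (mul_eq_zero.1 (by linear_combination hr₀ - hs₀ :
      (r - s) * (v - u - c + c * (r + s)) = 0)).resolve_left (sub_ne_zero.2 hne)
  have hvieta : u * v = c ^ 2 * (r * s * ((1 - r) * (1 - s))) := by
    linear_combination (c * r * s + v) * hr₀ + (c * r * s * (1 - r) - v * r) * hsum
  have : 0 < r * s * ((1 - r) * (1 - s)) :=
    mul_pos (mul_pos hr.1 hs.1) (mul_pos (sub_pos.2 hr.2) (sub_pos.2 hs.2))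
  nlinarith [sq_nonneg c]

def spohn₁ (a11 a12 a21 a22 : ℝ) (P : ℝ × ℝ × ℝ × ℝ) : ℝ :=
  (P.1 + P.2.1) * (a21 * P.2.2.1 + a22 * P.2.2.2) - (a11 * P.1 + a12 * P.2.1) * (P.2.2.1 + P.2.2.2)

def spohn₂ (b11 b12 b21 b22 : ℝ) (P : ℝ × ℝ × ℝ × ℝ) : ℝ :=
  (P.1 + P.2.2.1) * (b12 * P.2.1 + b22 * P.2.2.2) - (b11 * P.1 + b21 * P.2.2.1) * (P.2.1 + P.2.2.2)

lemma mem_depEquilibria_iff {a11 a12 a21 a22 b11 b12 b21 b22 : ℝ} {P : ℝ × ℝ × ℝ × ℝ} :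
    P ∈ depEquilibria a11 a12 a21 a22 b11 b12 b21 b22 ↔
      (0 < P.1 ∧ 0 < P.2.1 ∧ 0 < P.2.2.1 ∧ 0 < P.2.2.2) ∧ P.1 + P.2.1 + P.2.2.1 + P.2.2.2 = 1 ∧
        spohn₁ a11 a12 a21 a22 P = 0 ∧ spohn₂ b11 b12 b21 b22 P = 0 :=
  Iff.rfl

/-- The joint distribution in which the row player plays row 1 with probability `r`, and the
column player plays column 1 with probability `x` after row 1 and `y` after row 2. -/
def ofRowConditionals (r x y : ℝ) : ℝ × ℝ × ℝ × ℝ :=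
  (r * x, r * (1 - x), (1 - r) * y, (1 - r) * (1 - y))

section RowConditionals

variable {r x y : ℝ}

lemma exists_ofRowConditionals_eq {P : ℝ × ℝ × ℝ × ℝ}
    (hpos : 0 < P.1 ∧ 0 < P.2.1 ∧ 0 < P.2.2.1 ∧ 0 < P.2.2.2)
    (hsum : P.1 + P.2.1 + P.2.2.1 + P.2.2.2 = 1) :
    ∃ r ∈ Ioo (0 : ℝ) 1, ∃ x ∈ Ioo (0 : ℝ) 1, ∃ y ∈ Ioo (0 : ℝ) 1, ofRowConditionals r x y = P := by
  obtain ⟨p₁₁, p₁₂, p₂₁, p₂₂⟩ := P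
  obtain ⟨h₁₁, h₁₂, h₂₁, h₂₂⟩ := hpos
  dsimp only at h₁₁ h₁₂ h₂₁ h₂₂ hsum
  have h₁ : 0 < p₁₁ + p₁₂ := by positivity
  have h₂ : 0 < p₂₁ + p₂₂ := by positivity
  have hr : 1 - (p₁₁ + p₁₂) = p₂₁ + p₂₂ := by linarith
  refine ⟨p₁₁ + p₁₂, ⟨h₁, by linarith⟩, p₁₁ / (p₁₁ + p₁₂),
    ⟨by positivity, (div_lt_one h₁).2 (by linarith)⟩, p₂₁ / (p₂₁ + p₂₂),
    ⟨by positivity, (div_lt_one h₂).2 (by linarith)⟩, ?_⟩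
  simp only [ofRowConditionals, hr, Prod.mk.injEq]
  refine ⟨?_, ?_, ?_, ?_⟩ <;> field_simp <;> ring

lemma spohn₁_ofRowConditionals (a11 a12 a21 a22 r x y : ℝ) :
    spohn₁ a11 a12 a21 a22 (ofRowConditionals r x y) =
      r * (1 - r) * ((a21 * y + a22 * (1 - y)) - (a11 * x + a12 * (1 - x))) := by
  simp only [spohn₁, ofRowConditionals]; ring

lemma spohn₂_ofRowConditionals (b11 b12 b21 b22 r x y : ℝ) :
    spohn₂ b11 b12 b21 b22 (ofRowConditionals r x y) =
      (1 - r) * (y * (1 - y) * (b22 - b21)) + r * (x * (1 - x) * (b12 - b11))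
        - (x - y) * (b11 * x + b12 * (1 - x) - b21 * y - b22 * (1 - y)) * r * (1 - r) := by
  simp only [spohn₂, ofRowConditionals]; ring

lemma ofRowConditionals_mem_depEquilibria_iff {a11 a12 a21 a22 b11 b12 b21 b22 : ℝ}
    (hr : r ∈ Ioo (0 : ℝ) 1) (hx : x ∈ Ioo (0 : ℝ) 1) (hy : y ∈ Ioo (0 : ℝ) 1) :
    ofRowConditionals r x y ∈ depEquilibria a11 a12 a21 a22 b11 b12 b21 b22 ↔
      a11 * x + a12 * (1 - x) = a21 * y + a22 * (1 - y) ∧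
        spohn₂ b11 b12 b21 b22 (ofRowConditionals r x y) = 0 := by
  obtain ⟨hr₀, hr₁⟩ := hr
  obtain ⟨hx₀, hx₁⟩ := hx
  obtain ⟨hy₀, hy₁⟩ := hy
  have hr' : r * (1 - r) ≠ 0 := (mul_pos hr₀ (sub_pos.2 hr₁)).ne'
  rw [mem_depEquilibria_iff, spohn₁_ofRowConditionals, mul_eq_zero, sub_eq_zero]
  simp only [ofRowConditionals, hr', false_or]
  refine ⟨fun h => ⟨h.2.2.1.symm, h.2.2.2⟩, fun h => ⟨?_, by ring, h.1.symm, h.2⟩⟩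
  refine ⟨?_, ?_, ?_, ?_⟩ <;> apply mul_pos <;> linarith

end RowConditionals

/-- The condition `f₁ = 0` in the coordinates `(x, y)` of `ofRowConditionals`. -/
def rowIndifference (a11 a12 a21 a22 : ℝ) : Set (ℝ × ℝ) :=
  {q | q.1 ∈ Ioo 0 1 ∧ q.2 ∈ Ioo 0 1 ∧ a11 * q.1 + a12 * (1 - q.1) = a21 * q.2 + a22 * (1 - q.2)}

lemma convex_rowIndifference (a11 a12 a21 a22 : ℝ) :
    Convex ℝ (rowIndifference a11 a12 a21 a22) := by
  rintro ⟨x, y⟩ ⟨hx, hy, h⟩ ⟨x', y'⟩ ⟨hx', hy', h'⟩ s t hs ht hst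
  refine ⟨convex_Ioo 0 1 hx hx' hs ht hst, convex_Ioo 0 1 hy hy' hs ht hst, ?_⟩
  simp only [Prod.smul_mk, Prod.mk_add_mk, smul_eq_mul]
  linear_combination s * h + t * h' + (a22 - a12) * hst

/-- The diagonal point `x = y` of `rowIndifference` is the column player's mixed Nash strategy. -/
lemma rowIndifference_nonempty {a11 a12 a21 a22 : ℝ} (ha : 0 < (a11 - a21) * (a22 - a12)) :
    (rowIndifference a11 a12 a21 a22).Nonempty := by
  set t := (a22 - a12) / (a11 - a21 + (a22 - a12))
  have ht : t ∈ Ioo (0 : ℝ) 1 := by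
    rcases mul_pos_iff.1 ha with ⟨h₁, h₂⟩ | ⟨h₁, h₂⟩
    · exact ⟨div_pos h₂ (by linarith), (div_lt_one (by linarith)).2 (by linarith)⟩
    · exact ⟨div_pos_of_neg_of_neg h₂ (by linarith),
        (div_lt_one_of_neg (by linarith)).2 (by linarith)⟩
  have hne : a11 - a21 + (a22 - a12) ≠ 0 := by
    rcases mul_pos_iff.1 ha with ⟨h₁, h₂⟩ | ⟨h₁, h₂⟩ <;> linarith
  refine ⟨(t, t), ht, ht, ?_⟩
  simp only [t]
  field_simp
  ring

lemma exists_continuousOn_spohn₂_root {b11 b12 b21 b22 : ℝ}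
    (hb : 0 < (b11 - b12) * (b22 - b21)) :
    ∃ ρ : ℝ × ℝ → ℝ, ContinuousOn ρ (Ioo 0 1 ×ˢ Ioo 0 1) ∧
      ∀ q ∈ Ioo (0 : ℝ) 1 ×ˢ Ioo (0 : ℝ) 1, ρ q ∈ Ioo 0 1 ∧
        ∀ r ∈ Ioo (0 : ℝ) 1,
          spohn₂ b11 b12 b21 b22 (ofRowConditionals r q.1 q.2) = 0 ↔ r = ρ q := by
  have hb' : b21 ≠ b22 := fun h => by simp [h] at hb
  -- The factor `b₂₁ - b₂₂` orients `f₂` so that it is negative at `r = 0` and positive at `r = 1`.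
  have hF₀ : ∀ q ∈ Ioo (0 : ℝ) 1 ×ˢ Ioo (0 : ℝ) 1,
      (b21 - b22) * spohn₂ b11 b12 b21 b22 (ofRowConditionals 0 q.1 q.2) < 0 := by
    rintro ⟨x, y⟩ ⟨-, hy₀, hy₁⟩
    have hsq : 0 < (b22 - b21) ^ 2 := by have := sub_ne_zero.2 hb'.symm; positivity
    rw [spohn₂_ofRowConditionals]
    nlinarith [mul_pos (mul_pos hy₀ (sub_pos.2 hy₁)) hsq]
  have hF₁ : ∀ q ∈ Ioo (0 : ℝ) 1 ×ˢ Ioo (0 : ℝ) 1,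
      0 < (b21 - b22) * spohn₂ b11 b12 b21 b22 (ofRowConditionals 1 q.1 q.2) := by
    rintro ⟨x, y⟩ ⟨⟨hx₀, hx₁⟩, -⟩
    rw [spohn₂_ofRowConditionals]
    nlinarith [mul_pos (mul_pos hx₀ (sub_pos.2 hx₁)) hb]
  have huniq : ∀ q ∈ Ioo (0 : ℝ) 1 ×ˢ Ioo (0 : ℝ) 1,
      {r ∈ Ioo (0 : ℝ) 1 |
        (b21 - b22) * spohn₂ b11 b12 b21 b22 (ofRowConditionals r q.1 q.2) = 0}.Subsingleton := by
    rintro ⟨x, y⟩ ⟨⟨hx₀, hx₁⟩, hy₀, hy₁⟩ r ⟨hr, hFr⟩ s ⟨hs, hFs⟩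
    have huv : y * (1 - y) * (b22 - b21) * (x * (1 - x) * (b12 - b11)) < 0 := by
      nlinarith [mul_pos (mul_pos (mul_pos hx₀ (sub_pos.2 hx₁)) (mul_pos hy₀ (sub_pos.2 hy₁))) hb]
    simp only [mul_eq_zero, sub_ne_zero.2 hb', false_or, spohn₂_ofRowConditionals] at hFr hFs
    exact subsingleton_quadratic_roots huv _ ⟨hr, hFr⟩ ⟨hs, hFs⟩
  obtain ⟨ρ, hρc, hρ⟩ := exists_continuousOn_unique_root
    (s := Ioo 0 1 ×ˢ Ioo 0 1) (a := 0) (b := 1)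
    (F := fun (q : ℝ × ℝ) r => (b21 - b22) * spohn₂ b11 b12 b21 b22 (ofRowConditionals r q.1 q.2))
    zero_le_one (fun _ _ => by simp only [spohn₂_ofRowConditionals]; fun_prop)
    (fun _ => by simp only [spohn₂_ofRowConditionals]; fun_prop) hF₀ hF₁ huniq
  refine ⟨ρ, hρc, fun q hq => ⟨(hρ q hq).1, fun r hr => ?_⟩⟩
  rw [← (hρ q hq).2 r hr, mul_eq_zero, or_iff_right (sub_ne_zero.2 hb')]

lemma depEquilibria_eq_image {a11 a12 a21 a22 b11 b12 b21 b22 : ℝ} {ρ : ℝ × ℝ → ℝ}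
    (hρ : ∀ q ∈ Ioo (0 : ℝ) 1 ×ˢ Ioo (0 : ℝ) 1, ρ q ∈ Ioo 0 1 ∧
      ∀ r ∈ Ioo (0 : ℝ) 1, spohn₂ b11 b12 b21 b22 (ofRowConditionals r q.1 q.2) = 0 ↔ r = ρ q) :
    depEquilibria a11 a12 a21 a22 b11 b12 b21 b22 =
      (fun q => ofRowConditionals (ρ q) q.1 q.2) '' rowIndifference a11 a12 a21 a22 := by
  ext P
  constructor
  · intro hP
    obtain ⟨r, hr, x, hx, y, hy, rfl⟩ := exists_ofRowConditionals_eq hP.1 hP.2.1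
    obtain ⟨hxy, hroot⟩ := (ofRowConditionals_mem_depEquilibria_iff hr hx hy).1 hP
    obtain rfl := ((hρ (x, y) ⟨hx, hy⟩).2 r hr).1 hroot
    exact ⟨(x, y), ⟨hx, hy, hxy⟩, rfl⟩
  · rintro ⟨⟨x, y⟩, ⟨hx, hy, hxy⟩, rfl⟩
    obtain ⟨hr, hroot⟩ := hρ (x, y) ⟨hx, hy⟩
    exact (ofRowConditionals_mem_depEquilibria_iff hr hx hy).2 ⟨hxy, (hroot _ hr).2 rfl⟩

theorem generic_game_sign_condition_one_arc :
    ∃ g : MvPolynomial (Fin 8) ℝ, g ≠ 0 ∧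
      ∀ a11 a12 a21 a22 b11 b12 b21 b22 : ℝ,
        MvPolynomial.eval
          (![a11, a12, a21, a22, b11, b12, b21, b22]) g ≠ 0 →
        0 < (a11 - a21) * (a22 - a12) →
        0 < (b11 - b12) * (b22 - b21) →
        IsConnected (depEquilibria a11 a12 a21 a22 b11 b12 b21 b22) := by
  refine ⟨1, one_ne_zero, fun a11 a12 a21 a22 b11 b12 b21 b22 _ ha hb => ?_⟩
  obtain ⟨ρ, hρc, hρ⟩ := exists_continuousOn_spohn₂_root hb
  rw [depEquilibria_eq_image hρ]
  refine ((convex_rowIndifference _ _ _ _).isConnected (rowIndifference_nonempty ha)).image _ ?_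
  have hρC : ContinuousOn ρ (rowIndifference a11 a12 a21 a22) :=
    hρc.mono fun q hq => ⟨hq.1, hq.2.1⟩
  unfold ofRowConditionals
  fun_prop
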